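/- Let g be a positive definite Hermitian n×n complex matrix and A an arbitrary n×n complex matrix. Then λ(A,g) := (1/2)(√g)^{−1} I_g(−A* g − g A)(√g)^{−1} + √g · A · (√g)^{−1} is skew-Hermitian: λ(A,g)* = −λ(A,g). -/

import Mathlib

open MeasureTheory Complex Matrix
open scoped ComplexOrder

/-- The complex matrix power `A ^ z` of a Hermitian matrix `A`, defined by functional
calculus: apply `fun x => x ^ z` to the eigenvalues of `A` in a unitary eigenbasis.
(Junk value `0` if `A` is not Hermitian.) -/
noncomputable def matCpow {n : ℕ} (A : Matrix (Fin n) (Fin n) ℂ) (z : ℂ) :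
    Matrix (Fin n) (Fin n) ℂ :=
  @dite _ A.IsHermitian (Classical.dec _)
    (fun hA => (hA.eigenvectorUnitary : Matrix (Fin n) (Fin n) ℂ) *
        Matrix.diagonal (fun i => (hA.eigenvalues i : ℂ) ^ z) *
        star (hA.eigenvectorUnitary : Matrix (Fin n) (Fin n) ℂ))
    (fun _ => 0)

/-- The positive semidefinite square root of a positive semidefinite matrix.
(Junk value `0` if `A` is not positive semidefinite.) -/
noncomputable def matSqrt {n : ℕ} (A : Matrix (Fin n) (Fin n) ℂ) :
    Matrix (Fin n) (Fin n) ℂ :=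
  @dite _ A.PosSemidef (Classical.dec _)
    (fun h => (h.1.eigenvectorUnitary : Matrix (Fin n) (Fin n) ℂ) *
      Matrix.diagonal ((↑) ∘ Real.sqrt ∘ h.1.eigenvalues) *
      (star h.1.eigenvectorUnitary : Matrix (Fin n) (Fin n) ℂ)) (fun _ => 0)

/-- `I_g(X) := ∫_ℝ (√g)^{it+1/2} X (√g)^{-it-1/2} dt / cosh (π t)`, taken entrywise. -/
noncomputable def Ig {n : ℕ} (g X : Matrix (Fin n) (Fin n) ℂ) :
    Matrix (Fin n) (Fin n) ℂ :=
  Matrix.of fun i j => ∫ t : ℝ,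
    (matCpow (matSqrt g) (Complex.I * t + 1 / 2) * X *
      matCpow (matSqrt g) (-(Complex.I * t) - 1 / 2)) i j / (Real.cosh (Real.pi * t) : ℂ)

/-- The infinitesimal natural lift
`λ(A,g) := (1/2)(√g)⁻¹ I_g(−A* g − g A)(√g)⁻¹ + √g · A · (√g)⁻¹`. -/
noncomputable def lamLift {n : ℕ} (A g : Matrix (Fin n) (Fin n) ℂ) :
    Matrix (Fin n) (Fin n) ℂ :=
  (1 / 2 : ℂ) • ((matSqrt g)⁻¹ * Ig g (-(star A * g) - g * A) * (matSqrt g)⁻¹) +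
    matSqrt g * A * (matSqrt g)⁻¹

/-!
In an eigenbasis of `√g`, with eigenvalues `μ`, the integrand of `I_g(X)` has entries
`μ_p ^ (it + 1/2) X_pq μ_q ^ (-it - 1/2) / cosh (π t)`. The Fourier transform
`∫ e^{ixt} / cosh (π t) dt = 1 / cosh (x / 2)`, which is the reflection formula
`B(s, 1 - s) = π / sin (π s)` at `s = 1/2 + ix/(2π)` after the substitution `y = σ(2πt)`
(`σ` the logistic sigmoid) in the beta integral, turns `I_g` into the Schur multiplier with kernel
`2 μ_p / (μ_p + μ_q)`. This kernel plus its transpose is identically `2`, so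
`I_g(Y)* + I_g(Y) = 2 Y` for Hermitian `Y`. For `Y = -A* g - g A` and `g = √g √g` this gives
`λ(A,g)* + λ(A,g) = (√g)⁻¹ Y (√g)⁻¹ + (√g)⁻¹ A* √g + √g A (√g)⁻¹ = 0`.
-/

open Set Real

lemma Real.sigmoid_mul_exp_neg_half (v : ℝ) :
    sigmoid v * Real.exp (-(v / 2)) = (2 * Real.cosh (v / 2))⁻¹ := by
  have h : (1 + Real.exp (-v)) * Real.exp (v / 2) = 2 * Real.cosh (v / 2) := by
    rw [Real.cosh_eq, add_mul, ← Real.exp_add]; ring_nf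
  rw [← h, sigmoid_def, mul_inv, ← Real.exp_neg]

lemma Real.log_sigmoid (v : ℝ) :
    Real.log (sigmoid v) = v / 2 - Real.log (2 * Real.cosh (v / 2)) := by
  have h : sigmoid v = Real.exp (v / 2) * (2 * Real.cosh (v / 2))⁻¹ := by
    rw [← sigmoid_mul_exp_neg_half, mul_left_comm, ← Real.exp_add, add_neg_cancel,
      Real.exp_zero, mul_one]
  rw [h, Real.log_mul (Real.exp_pos _).ne' (by positivity), Real.log_exp, Real.log_inv]
  ring

lemma Real.sigmoid_log_sub_log {a b : ℝ} (ha : 0 < a) (hb : 0 < b) :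
    sigmoid (Real.log a - Real.log b) = a / (a + b) := by
  rw [sigmoid_def, neg_sub, Real.exp_sub, Real.exp_log ha, Real.exp_log hb]
  field_simp

lemma Real.exp_half_div_cosh_half (x : ℝ) :
    Real.exp (x / 2) / Real.cosh (x / 2) = 2 * sigmoid x := by
  have h := sigmoid_mul_exp_neg_half x
  rw [mul_inv, Real.exp_neg] at h
  have := Real.exp_pos (x / 2)
  have := Real.cosh_pos (x / 2)
  field_simp at h ⊢
  linarith

lemma Complex.sigmoid_cpow_mul_sigmoid_neg_cpow (ξ v : ℝ) :
    (sigmoid v : ℂ) ^ (1 / 2 + ξ * I) * (sigmoid (-v) : ℂ) ^ (1 / 2 - ξ * I) =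
      cexp (ξ * v * I) / (2 * Real.cosh (v / 2) : ℝ) := by
  have hc : ((2 * Real.cosh (v / 2) : ℝ) : ℂ) = cexp (Real.log (2 * Real.cosh (v / 2))) := by
    rw [← ofReal_exp, Real.exp_log (by positivity)]
  rw [hc, cpow_def_of_ne_zero (by exact_mod_cast (sigmoid_pos v).ne'),
    cpow_def_of_ne_zero (by exact_mod_cast (sigmoid_pos (-v)).ne'),
    ← ofReal_log (sigmoid_pos v).le, ← ofReal_log (sigmoid_pos (-v)).le,
    log_sigmoid, log_sigmoid, neg_div, Real.cosh_neg, ← Complex.exp_add, ← Complex.exp_sub]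
  congr 1
  push_cast
  ring

lemma Complex.abs_deriv_sigmoid_smul_betaIntegrand (u w : ℂ) (v : ℝ) :
    |sigmoid v * (1 - sigmoid v)| •
        ((sigmoid v : ℂ) ^ (u - 1) * (1 - (sigmoid v : ℂ)) ^ (w - 1)) =
      (sigmoid v : ℂ) ^ u * (sigmoid (-v) : ℂ) ^ w := by
  have h₀ : (sigmoid v : ℂ) ≠ 0 := by exact_mod_cast (sigmoid_pos v).ne'
  have h₁ : (sigmoid (-v) : ℂ) ≠ 0 := by exact_mod_cast (sigmoid_pos (-v)).ne'
  rw [← sigmoid_neg, abs_of_pos (mul_pos (sigmoid_pos v) (sigmoid_pos (-v))),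
    show (1 : ℂ) - sigmoid v = sigmoid (-v) by rw [sigmoid_neg]; push_cast; ring,
    cpow_sub _ _ h₀, cpow_sub _ _ h₁, cpow_one, cpow_one, real_smul]
  push_cast
  field_simp

theorem Complex.betaIntegral_eq_integral_sigmoid (u w : ℂ) :
    betaIntegral u w = ∫ v : ℝ, (sigmoid v : ℂ) ^ u * (sigmoid (-v) : ℂ) ^ w := by
  have hsub := integral_image_eq_integral_abs_deriv_smul MeasurableSet.univ
    (fun v _ => (hasDerivAt_sigmoid v).hasDerivWithinAt) sigmoid_injective.injOn
    (fun y : ℝ => (y : ℂ) ^ (u - 1) * (1 - (y : ℂ)) ^ (w - 1))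
  rw [image_univ, range_sigmoid, setIntegral_univ] at hsub
  simp only [abs_deriv_sigmoid_smul_betaIntegrand] at hsub
  rw [betaIntegral, intervalIntegral.integral_of_le zero_le_one, integral_Ioc_eq_integral_Ioo,
    hsub]

theorem Complex.integrable_sigmoid_cpow_mul_sigmoid_neg_cpow {u w : ℂ} (hu : 0 < u.re)
    (hw : 0 < w.re) :
    Integrable fun v : ℝ => (sigmoid v : ℂ) ^ u * (sigmoid (-v) : ℂ) ^ w := by
  have hsub := integrableOn_image_iff_integrableOn_abs_deriv_smul MeasurableSet.univ
    (fun v _ => (hasDerivAt_sigmoid v).hasDerivWithinAt) sigmoid_injective.injOn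
    (fun y : ℝ => (y : ℂ) ^ (u - 1) * (1 - (y : ℂ)) ^ (w - 1))
  rw [image_univ, range_sigmoid, integrableOn_univ] at hsub
  simp only [abs_deriv_sigmoid_smul_betaIntegrand] at hsub
  refine hsub.mp ?_
  rw [← integrableOn_Icc_iff_integrableOn_Ioo, ← intervalIntegrable_iff_integrableOn_Icc_of_le
    zero_le_one]
  exact betaIntegral_convergent hu hw

lemma Complex.betaIntegral_half_add_mul_I (ξ : ℝ) :
    betaIntegral (1 / 2 + ξ * I) (1 / 2 - ξ * I) = π / (Real.cosh (π * ξ) : ℝ) := by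
  have h := Gamma_mul_Gamma_eq_betaIntegral (s := 1 / 2 + ξ * I) (t := 1 / 2 - ξ * I)
    (by simp) (by simp)
  rw [show (1 / 2 + ξ * I : ℂ) + (1 / 2 - ξ * I) = 1 by ring, Gamma_one, one_mul,
    show (1 / 2 - ξ * I : ℂ) = 1 - (1 / 2 + ξ * I) by ring, Gamma_mul_Gamma_one_sub] at h
  rw [show (1 / 2 - ξ * I : ℂ) = 1 - (1 / 2 + ξ * I) by ring, ← h,
    show (π : ℂ) * (1 / 2 + ξ * I) = (π * ξ : ℝ) * I + π / 2 by push_cast; ring,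
    sin_add_pi_div_two, cos_mul_I, ofReal_cosh]

lemma Complex.cexp_mul_I_div_cosh_eq_sigmoid_cpow (x t : ℝ) :
    cexp (x * t * I) / (Real.cosh (π * t) : ℂ) =
      2 * ((sigmoid (2 * π * t) : ℂ) ^ (1 / 2 + (x / (2 * π) : ℝ) * I) *
        (sigmoid (-(2 * π * t)) : ℂ) ^ (1 / 2 - (x / (2 * π) : ℝ) * I)) := by
  rw [sigmoid_cpow_mul_sigmoid_neg_cpow, show 2 * π * t / 2 = π * t by ring]
  have hx : ((x / (2 * π) : ℝ) : ℂ) * (2 * π * t : ℝ) = x * t := by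
    push_cast; field_simp
  rw [hx]
  push_cast
  field_simp

theorem Complex.integrable_cexp_mul_I_div_cosh (x : ℝ) :
    Integrable fun t : ℝ => cexp (x * t * I) / (Real.cosh (π * t) : ℂ) := by
  simp only [cexp_mul_I_div_cosh_eq_sigmoid_cpow]
  exact ((integrable_sigmoid_cpow_mul_sigmoid_neg_cpow (by simp [-ofReal_div])
    (by simp [-ofReal_div])).comp_mul_left' (by positivity)).const_mul 2

theorem Complex.integral_cexp_mul_I_div_cosh (x : ℝ) :
    ∫ t : ℝ, cexp (x * t * I) / (Real.cosh (π * t) : ℂ) = 1 / (Real.cosh (x / 2) : ℂ) := by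
  simp only [cexp_mul_I_div_cosh_eq_sigmoid_cpow]
  rw [integral_const_mul, Measure.integral_comp_mul_left (fun v : ℝ =>
      (sigmoid v : ℂ) ^ (1 / 2 + (x / (2 * π) : ℝ) * I) *
        (sigmoid (-v) : ℂ) ^ (1 / 2 - (x / (2 * π) : ℝ) * I)),
    ← betaIntegral_eq_integral_sigmoid, betaIntegral_half_add_mul_I,
    show π * (x / (2 * π)) = x / 2 by field_simp, abs_of_pos (by positivity), real_smul]
  push_cast
  field_simp

lemma Complex.cpow_mul_cpow_div_cosh_eq {a b : ℝ} (ha : 0 < a) (hb : 0 < b) (t : ℝ) :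
    (a : ℂ) ^ (I * t + 1 / 2) * (b : ℂ) ^ (-(I * t) - 1 / 2) / (Real.cosh (π * t) : ℂ) =
      Real.exp ((Real.log a - Real.log b) / 2) *
        (cexp ((Real.log a - Real.log b : ℝ) * t * I) / (Real.cosh (π * t) : ℂ)) := by
  rw [cpow_def_of_ne_zero (ofReal_ne_zero.mpr ha.ne'),
    cpow_def_of_ne_zero (ofReal_ne_zero.mpr hb.ne'), ← ofReal_log ha.le, ← ofReal_log hb.le,
    ofReal_exp, mul_div_assoc', ← Complex.exp_add, ← Complex.exp_add]
  congr 2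
  push_cast
  ring

theorem Complex.integrable_cpow_mul_cpow_div_cosh {a b : ℝ} (ha : 0 < a) (hb : 0 < b) :
    Integrable fun t : ℝ => (a : ℂ) ^ (I * t + 1 / 2) * (b : ℂ) ^ (-(I * t) - 1 / 2) /
      (Real.cosh (π * t) : ℂ) := by
  simp only [cpow_mul_cpow_div_cosh_eq ha hb]
  exact (integrable_cexp_mul_I_div_cosh _).const_mul _

theorem Complex.integral_cpow_mul_cpow_div_cosh {a b : ℝ} (ha : 0 < a) (hb : 0 < b) :
    ∫ t : ℝ, (a : ℂ) ^ (I * t + 1 / 2) * (b : ℂ) ^ (-(I * t) - 1 / 2) /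
      (Real.cosh (π * t) : ℂ) = (2 * a / (a + b) : ℝ) := by
  simp only [cpow_mul_cpow_div_cosh_eq ha hb]
  rw [integral_const_mul, integral_cexp_mul_I_div_cosh, mul_one_div, ← ofReal_div,
    exp_half_div_cosh_half, sigmoid_log_sub_log ha hb, mul_div_assoc]

theorem Matrix.integral_mul_mul_apply {α m n p q 𝕜 : Type*} [RCLike 𝕜] [MeasurableSpace α]
    {μ : Measure α} [Fintype n] [Fintype p] (V : Matrix m n 𝕜) (M : α → Matrix n p 𝕜)
    (W : Matrix p q 𝕜) (hM : ∀ k l, Integrable (fun x => M x k l) μ) (i : m) (j : q) :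
    ∫ x, (V * M x * W) i j ∂μ = (V * of (fun k l => ∫ x, M x k l ∂μ) * W) i j := by
  simp only [mul_apply, of_apply, Finset.sum_mul]
  rw [integral_finsetSum _ fun l _ => integrable_finsetSum _ fun k _ =>
    ((hM k l).const_mul _).mul_const _]
  refine Finset.sum_congr rfl fun l _ => ?_
  rw [integral_finsetSum _ fun k _ => ((hM k l).const_mul _).mul_const _]
  refine Finset.sum_congr rfl fun k _ => ?_
  rw [integral_mul_const, integral_const_mul]

lemma Matrix.mul_diagonal_mul_mul_mul_diagonal_mul {m n R : Type*} [Fintype m] [Fintype n]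
    [DecidableEq m] [Semiring R] (U : Matrix n m R) (V : Matrix m n R) (X : Matrix n n R)
    (a b : m → R) :
    U * diagonal a * V * X * (U * diagonal b * V) =
      U * of (fun p q => a p * (V * X * U) p q * b q) * V := by
  have h : of (fun p q => a p * (V * X * U) p q * b q) =
      diagonal a * (V * X * U) * diagonal b := by
    ext p q
    simp only [of_apply, diagonal_mul, mul_diagonal]
  rw [h]
  simp only [Matrix.mul_assoc]

lemma Matrix.star_hadamard_add_hadamard {m R : Type*} [CommSemiring R] [StarRing R]
    {W K : Matrix m m R} (hW : W.IsHermitian) {c : R} (hK : ∀ p q, star (K q p) + K p q = c) :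
    star (W ⊙ K) + W ⊙ K = c • W := by
  ext p q
  rw [add_apply, star_apply, hadamard_apply, hadamard_apply, star_mul', hW.apply, smul_apply,
    smul_eq_mul, ← hK p q]
  ring

section matSqrt

open scoped MatrixOrder

variable {n : ℕ} {A : Matrix (Fin n) (Fin n) ℂ}

lemma matSqrt_eq_cfcSqrt (hA : A.PosSemidef) : matSqrt A = CFC.sqrt A := by
  rw [CFC.sqrt_eq_cfc, cfc_nnreal_eq_real _ A, hA.1.cfc_eq, matSqrt, dif_pos hA]
  simp [IsHermitian.cfc, Unitary.conjStarAlgAut_apply, Function.comp_def,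
    max_eq_left (hA.eigenvalues_nonneg _)]

lemma matSqrt_mul_self (hA : A.PosSemidef) : matSqrt A * matSqrt A = A := by
  rw [matSqrt_eq_cfcSqrt hA]
  exact CFC.sqrt_mul_sqrt_self A hA.nonneg

lemma Matrix.PosDef.matSqrt (hA : A.PosDef) : (matSqrt A).PosDef := by
  rw [matSqrt_eq_cfcSqrt hA.posSemidef]
  exact (IsStrictlyPositive.sqrt A hA.isStrictlyPositive).posDef

end matSqrt

section matCpow

variable {n : ℕ} {S : Matrix (Fin n) (Fin n) ℂ}

lemma matCpow_of_isHermitian (hS : S.IsHermitian) (z : ℂ) :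
    matCpow S z = (hS.eigenvectorUnitary : Matrix (Fin n) (Fin n) ℂ) *
      diagonal (fun i => (hS.eigenvalues i : ℂ) ^ z) *
      star (hS.eigenvectorUnitary : Matrix (Fin n) (Fin n) ℂ) :=
  dif_pos hS

theorem integral_matCpow_mul_matCpow_div_cosh_apply (hS : S.PosDef)
    (X : Matrix (Fin n) (Fin n) ℂ) (i j : Fin n) :
    ∫ t : ℝ, (matCpow S (I * t + 1 / 2) * X * matCpow S (-(I * t) - 1 / 2)) i j /
        (Real.cosh (π * t) : ℂ) =
      ((hS.isHermitian.eigenvectorUnitary : Matrix (Fin n) (Fin n) ℂ) *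
        ((star (hS.isHermitian.eigenvectorUnitary : Matrix (Fin n) (Fin n) ℂ) * X *
            (hS.isHermitian.eigenvectorUnitary : Matrix (Fin n) (Fin n) ℂ)) ⊙
          of fun p q => ((2 * hS.isHermitian.eigenvalues p /
            (hS.isHermitian.eigenvalues p + hS.isHermitian.eigenvalues q) : ℝ) : ℂ)) *
        star (hS.isHermitian.eigenvectorUnitary : Matrix (Fin n) (Fin n) ℂ)) i j := by
  set U : Matrix (Fin n) (Fin n) ℂ := ↑hS.isHermitian.eigenvectorUnitary
  set μ := hS.isHermitian.eigenvalues
  set W := star U * X * U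
  let k : Fin n → Fin n → ℝ → ℂ := fun p q t =>
    (μ p : ℂ) ^ (I * t + 1 / 2) * (μ q : ℂ) ^ (-(I * t) - 1 / 2) / (Real.cosh (π * t) : ℂ)
  have hconj : ∀ t : ℝ, (matCpow S (I * t + 1 / 2) * X * matCpow S (-(I * t) - 1 / 2)) i j /
      (Real.cosh (π * t) : ℂ) = (U * of (fun p q => W p q * k p q t) * star U) i j := fun t => by
    have hmat : ((Real.cosh (π * t) : ℂ))⁻¹ • (matCpow S (I * t + 1 / 2) * X *
        matCpow S (-(I * t) - 1 / 2)) = U * of (fun p q => W p q * k p q t) * star U := by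
      rw [matCpow_of_isHermitian hS.isHermitian, matCpow_of_isHermitian hS.isHermitian,
        mul_diagonal_mul_mul_mul_diagonal_mul, ← Matrix.smul_mul, ← Matrix.mul_smul]
      congr 2
      ext p q
      simp only [Matrix.smul_apply, of_apply, smul_eq_mul, k, W, U, μ]
      ring
    rw [div_eq_inv_mul, ← hmat]
    rfl
  have hk : ∀ p q, Integrable fun t => W p q * k p q t := fun p q =>
    (integrable_cpow_mul_cpow_div_cosh (hS.eigenvalues_pos p) (hS.eigenvalues_pos q)).const_mul _
  rw [integral_congr_ae (ae_of_all _ hconj),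
    integral_mul_mul_apply U (fun t => of fun p q => W p q * k p q t) (star U) hk]
  refine congrArg (fun M : Matrix (Fin n) (Fin n) ℂ => (U * M * star U) i j) ?_
  ext p q
  simp only [of_apply, hadamard_apply, k]
  rw [integral_const_mul, integral_cpow_mul_cpow_div_cosh (hS.eigenvalues_pos p)
    (hS.eigenvalues_pos q)]

end matCpow

theorem star_Ig_add_Ig {n : ℕ} {g Y : Matrix (Fin n) (Fin n) ℂ} (hg : g.PosDef)
    (hY : Y.IsHermitian) : star (Ig g Y) + Ig g Y = (2 : ℂ) • Y := by
  have hS := hg.matSqrt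
  set U : Matrix (Fin n) (Fin n) ℂ := ↑hS.isHermitian.eigenvectorUnitary
  set μ := hS.isHermitian.eigenvalues
  set K : Matrix (Fin n) (Fin n) ℂ := of fun p q => ((2 * μ p / (μ p + μ q) : ℝ) : ℂ)
  have hIg : Ig g Y = U * ((star U * Y * U) ⊙ K) * star U :=
    ext fun i j => integral_matCpow_mul_matCpow_div_cosh_apply hS Y i j
  have hW : (star U * Y * U).IsHermitian := isHermitian_conjTranspose_mul_mul U hY
  have hK : ∀ p q, star (K q p) + K p q = 2 := fun p q => by
    have hsum : 0 < μ p + μ q := add_pos (hS.eigenvalues_pos p) (hS.eigenvalues_pos q)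
    have h : 2 * μ q / (μ q + μ p) + 2 * μ p / (μ p + μ q) = 2 := by
      rw [add_comm (μ q)]
      field_simp
      ring
    simp only [K, of_apply]
    rw [Complex.star_def, conj_ofReal, ← ofReal_add, h, ofReal_ofNat]
  have hU : U * star U = 1 := mem_unitaryGroup_iff.mp hS.isHermitian.eigenvectorUnitary.2
  rw [hIg, star_mul, star_mul, star_star, ← Matrix.mul_assoc, ← Matrix.add_mul,
    ← Matrix.mul_add, star_hadamard_add_hadamard hW hK]
  simp only [Matrix.mul_smul, Matrix.smul_mul, ← Matrix.mul_assoc, hU, Matrix.one_mul]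
  simp only [Matrix.mul_assoc, hU, Matrix.mul_one]

/-- For `g` positive definite Hermitian, `λ(A,g)` is skew-Hermitian. -/
theorem lamLift_skewHermitian {n : ℕ} (A g : Matrix (Fin n) (Fin n) ℂ) (hg : g.PosDef) :
    star (lamLift A g) = -lamLift A g := by
  rw [eq_neg_iff_add_eq_zero]
  unfold lamLift
  set S := matSqrt g
  set Y := -(star A * g) - g * A
  have hS : S.PosDef := hg.matSqrt
  have : Invertible S := hS.isUnit.invertible
  have hSS : S * S = g := matSqrt_mul_self hg.posSemidef
  have hSinv : star S⁻¹ = S⁻¹ := hS.isHermitian.inv.star_eq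
  have hY : Y.IsHermitian := by
    simp only [IsHermitian, Y, ← star_eq_conjTranspose, star_sub, star_neg, star_mul, star_star,
      hg.isHermitian.star_eq]
    abel
  calc _ = (1 / 2 : ℂ) • (S⁻¹ * (star (Ig g Y) + Ig g Y) * S⁻¹) +
          (S⁻¹ * star A * S + S * A * S⁻¹) := by
        simp only [star_add, star_smul, star_mul, hSinv, hS.isHermitian.star_eq, star_div₀, star_one,
          star_ofNat, Matrix.mul_add, Matrix.add_mul, smul_add, Matrix.mul_assoc]
        abel
    _ = S⁻¹ * Y * S⁻¹ + (S⁻¹ * star A * S + S * A * S⁻¹) := by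
        rw [star_Ig_add_Ig hg hY, Matrix.mul_smul, Matrix.smul_mul, smul_smul]
        norm_num
    _ = 0 := by
        simp only [Y, ← hSS, Matrix.sub_mul, Matrix.mul_sub, Matrix.neg_mul, Matrix.mul_neg,
          Matrix.mul_assoc, inv_mul_cancel_left_of_invertible, mul_inv_of_invertible,
          Matrix.mul_one]
        abel
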